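/- arXiv:1907.13254 — 2 statements merged into one kernel-verified Lean document; each statement's English description precedes it below -/
import Mathlib

section
/- For n = 2, let τ be the ℂ-algebra automorphism of L with τ(x_{11}) = x_{11}, τ(x_{21}) = x_{22} and τ(x_{22}) = x_{21}. Then the fixed subalgebra of 𝒜(gl_2) under conjugation by τ equals U_2: {u ∈ 𝒜(gl_2) : τ ∘ u ∘ τ^{-1} = u} = U_2. -/
open scoped BigOperators
open MvPolynomial

noncomputable section

/-- The polynomial ring `Λ = ℂ[x_{ki}]` (variables indexed by pairs `(k, i)`). -/
abbrev Lam : Type := MvPolynomial (ℕ × ℕ) ℂ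

/-- `L`, the field of fractions of `Λ`. -/
abbrev L : Type := FractionRing Lam

/-- The variable `x_{ki}` as an element of `L`. -/
def x (k i : ℕ) : L := algebraMap Lam L (X (k, i))

/-- The algebra automorphism of `Λ` sending `x_v ↦ x_v - 1` and fixing the other variables. -/
def shiftEquiv (v : ℕ × ℕ) : Lam ≃ₐ[ℂ] Lam :=
  AlgEquiv.ofAlgHom
    (aeval (fun w => if w = v then X w - 1 else X w))
    (aeval (fun w => if w = v then X w + 1 else X w))
    (by apply MvPolynomial.algHom_ext; intro w; by_cases h : w = v <;> simp [h])
    (by apply MvPolynomial.algHom_ext; intro w; by_cases h : w = v <;> simp [h])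

/-- The automorphism `δ^{ki}` of `L`, determined by `δ^{ki}(x_{ℓj}) = x_{ℓj} - δ_{ℓk}δ_{ij}`. -/
def δ (k i : ℕ) : L ≃ₐ[ℂ] L := IsFractionRing.algEquivOfAlgEquiv (shiftEquiv (k, i))

/-- Multiplication by `a ∈ L` as a `ℂ`-linear endomorphism `m_a` of `L`. -/
def mulOp (a : L) : Module.End ℂ L := LinearMap.mulLeft ℂ a

/-- A field automorphism of `L` as a `ℂ`-linear endomorphism of `L`. -/
def lin (e : L ≃ₐ[ℂ] L) : Module.End ℂ L := e.toLinearMap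

/-- The rational function `a_{ki}^+`. -/
def aP (k i : ℕ) : L :=
  -((∏ j ∈ Finset.Icc 1 (k + 1), (x (k + 1) j - x k i)) /
    ∏ j ∈ (Finset.Icc 1 k).erase i, (x k j - x k i))

/-- The rational function `a_{ki}^-`. -/
def aM (k i : ℕ) : L :=
  (∏ j ∈ Finset.Icc 1 (k - 1), (x (k - 1) j - x k i)) /
    ∏ j ∈ (Finset.Icc 1 k).erase i, (x k j - x k i)

/-- The operator `A_{ki}^+ = δ^{ki} ∘ m_{a_{ki}^+}`. -/
def Ap (k i : ℕ) : Module.End ℂ L := lin (δ k i) * mulOp (aP k i)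

/-- The operator `A_{ki}^- = (δ^{ki})^{-1} ∘ m_{a_{ki}^-}`. -/
def Am (k i : ℕ) : Module.End ℂ L := lin (δ k i).symm * mulOp (aM k i)

/-- The operator `X_k^+ = ∑_{i=1}^k A_{ki}^+`. -/
def Xp (k : ℕ) : Module.End ℂ L := ∑ i ∈ Finset.Icc 1 k, Ap k i

/-- The operator `X_k^- = ∑_{i=1}^k A_{ki}^-`. -/
def Xm (k : ℕ) : Module.End ℂ L := ∑ i ∈ Finset.Icc 1 k, Am k i

/-- The operator `X_{kk}`. -/
def Xd (k : ℕ) : Module.End ℂ L :=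
  mulOp ((∑ j ∈ Finset.Icc 1 k, (x k j + (j : L) - 1)) -
    ∑ i ∈ Finset.Icc 1 (k - 1), (x (k - 1) i + (i : L) - 1))

/-- The Vandermonde polynomial `∏_{1 ≤ i < j ≤ k} (x_{ki} - x_{kj})`, as an element of `L`. -/
def vand (k : ℕ) : L :=
  ∏ p ∈ (Finset.Icc 1 k ×ˢ Finset.Icc 1 k).filter (fun p => p.1 < p.2),
    (x k p.1 - x k p.2)

/-- The operator `𝒱_k = m_{∏_{i<j}(x_{ki} - x_{kj})}`. -/
def Vop (k : ℕ) : Module.End ℂ L := mulOp (vand k)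

/-- The generating set of `U_n`: the `X_k^±` for `1 ≤ k ≤ n-1` and the `X_{kk}` for `1 ≤ k ≤ n`. -/
def Ugens (n : ℕ) : Set (Module.End ℂ L) :=
  {u | ∃ k, 1 ≤ k ∧ k + 1 ≤ n ∧ (u = Xp k ∨ u = Xm k)} ∪
    {u | ∃ k, 1 ≤ k ∧ k ≤ n ∧ u = Xd k}

/-- `U_n`, the Gelfand–Tsetlin realization of `U(gl_n)` inside `End_ℂ(L)`. -/
def Ualg (n : ℕ) : Subalgebra ℂ (Module.End ℂ L) := Algebra.adjoin ℂ (Ugens n)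

/-- `𝒜(gl_n)`, the subalgebra generated by `U_n` together with `𝒱_2, …, 𝒱_n`. -/
def Agl (n : ℕ) : Subalgebra ℂ (Module.End ℂ L) :=
  Algebra.adjoin ℂ (Ugens n ∪ {u | ∃ k, 2 ≤ k ∧ k ≤ n ∧ u = Vop k})

/-- The ℂ-algebra automorphism `τ` of `L` with `τ(x_{11}) = x_{11}`, `τ(x_{21}) = x_{22}`,
`τ(x_{22}) = x_{21}`. -/
def τ2 : L ≃ₐ[ℂ] L :=
  IsFractionRing.algEquivOfAlgEquiv
    (MvPolynomial.renameEquiv ℂ (Equiv.swap ((2, 1) : ℕ × ℕ) (2, 2)))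

/-!
Every element of `𝒜(gl₂)` can be written `a + 𝒱₂ b` with `a, b ∈ U₂`: indeed `𝒱₂` is
multiplication by `x₂₁ - x₂₂`, which commutes with `U₂` because the only shift occurring in `U₂`
is `δ¹¹`, and `𝒱₂²` lies in `U₂` because `(x₂₁ - x₂₂)²` is a polynomial in `x₁₁`, `x₂₁ + x₂₂`
and `a₁₁⁺`, while `m_{a₁₁⁺} = X₁⁻ X₁⁺`. Conjugation by `τ` fixes the generators of `U₂` (`τ`
commutes with `δ¹¹` and fixes the symmetric functions of `x₂₁, x₂₂`) and negates `𝒱₂`, so it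
sends `a + 𝒱₂ b` to `a - 𝒱₂ b`, and a fixed point has `𝒱₂ b = 0`.
-/

theorem exists_eq_add_mul_of_mem_adjoin_insert {R A : Type*} [CommSemiring R] [Semiring A]
    [Algebra R A] {S : Subalgebra R A} {v : A}
    (hcomm : ∀ a ∈ S, Commute v a) (hsq : v * v ∈ S) {u : A}
    (hu : u ∈ Algebra.adjoin R (insert v (S : Set A))) :
    ∃ a ∈ S, ∃ b ∈ S, u = a + v * b := by
  induction hu using Algebra.adjoin_induction with
  | mem w hw =>
    rcases hw with rfl | hw
    · exact ⟨0, zero_mem S, 1, one_mem S, by rw [zero_add, mul_one]⟩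
    · exact ⟨w, hw, 0, zero_mem S, by rw [mul_zero, add_zero]⟩
  | algebraMap r => exact ⟨algebraMap R A r, S.algebraMap_mem r, 0, zero_mem S, by simp⟩
  | add _ _ _ _ hw hw' =>
    obtain ⟨a, ha, b, hb, rfl⟩ := hw
    obtain ⟨c, hc, d, hd, rfl⟩ := hw'
    exact ⟨a + c, add_mem ha hc, b + d, add_mem hb hd, by rw [mul_add]; abel⟩
  | mul _ _ _ _ hw hw' =>
    obtain ⟨a, ha, b, hb, rfl⟩ := hw
    obtain ⟨c, hc, d, hd, rfl⟩ := hw'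
    refine ⟨a * c + v * v * (b * d), add_mem (mul_mem ha hc) (mul_mem hsq (mul_mem hb hd)),
      a * d + b * c, add_mem (mul_mem ha hd) (mul_mem hb hc), ?_⟩
    have hva : a * (v * d) = v * (a * d) := by rw [← mul_assoc, ← (hcomm a ha).eq, mul_assoc]
    have hvb : v * b * (v * d) = v * v * (b * d) := by
      rw [mul_assoc, ← mul_assoc b, ← (hcomm b hb).eq, mul_assoc, mul_assoc]
    rw [add_mul, mul_add, mul_add, hva, mul_assoc v b c, hvb, mul_add v]
    abel

theorem setOf_mem_adjoin_insert_and_fixed_eq {K A : Type*} [Field K] [NeZero (2 : K)] [Ring A]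
    [Algebra K A] {S : Subalgebra K A} {v : A} (σ : A →ₐ[K] A) (hσS : ∀ a ∈ S, σ a = a)
    (hσv : σ v = -v) (hcomm : ∀ a ∈ S, Commute v a) (hsq : v * v ∈ S) :
    {u | u ∈ Algebra.adjoin K (insert v (S : Set A)) ∧ σ u = u} = S := by
  ext u
  constructor
  · rintro ⟨hu, hfix⟩
    obtain ⟨a, ha, b, hb, rfl⟩ := exists_eq_add_mul_of_mem_adjoin_insert hcomm hsq hu
    rw [map_add, map_mul, hσS a ha, hσS b hb, hσv, neg_mul, add_right_inj,
      neg_eq_iff_add_eq_zero, ← two_smul K] at hfix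
    rw [(smul_eq_zero.mp hfix).resolve_left two_ne_zero, add_zero]
    exact ha
  · intro hu
    exact ⟨Algebra.subset_adjoin (Set.mem_insert_of_mem v hu), hσS u hu⟩

lemma algHom_ext_x {f g : L →ₐ[ℂ] L} (h : ∀ k i, f (x k i) = g (x k i)) : f = g :=
  IsLocalization.algHom_ext (nonZeroDivisors Lam) (MvPolynomial.algHom_ext fun p => h p.1 p.2)

lemma δ_apply_x (k i l j : ℕ) :
    δ k i (x l j) = if (l, j) = (k, i) then x l j - 1 else x l j := by
  rw [δ, x, IsFractionRing.algEquivOfAlgEquiv_algebraMap]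
  split_ifs with h <;> simp [shiftEquiv, h]

lemma τ2_apply_x (k i : ℕ) :
    τ2 (x k i) = x (Equiv.swap (2, 1) (2, 2) (k, i)).1 (Equiv.swap (2, 1) (2, 2) (k, i)).2 := by
  simp [τ2, x, IsFractionRing.algEquivOfAlgEquiv_algebraMap]

lemma τ2_x_one_one : τ2 (x 1 1) = x 1 1 := by simp [τ2_apply_x, Equiv.swap_apply_of_ne_of_ne]

lemma τ2_x_two_one : τ2 (x 2 1) = x 2 2 := by simp [τ2_apply_x]

lemma τ2_x_two_two : τ2 (x 2 2) = x 2 1 := by simp [τ2_apply_x]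

lemma mulOp_eq_lmul (a : L) : mulOp a = Algebra.lmul ℂ L a := rfl

lemma commute_mulOp (a b : L) : Commute (mulOp a) (mulOp b) :=
  (Commute.all a b).map (Algebra.lmul ℂ L)

lemma lin_mul_mulOp (e : L ≃ₐ[ℂ] L) (a : L) : lin e * mulOp a = mulOp (e a) * lin e := by
  ext f
  exact map_mul e a f

lemma lin_symm_mul_lin (e : L ≃ₐ[ℂ] L) : lin e.symm * lin e = 1 := by
  ext f
  exact e.symm_apply_apply f

lemma commute_mulOp_lin {e : L ≃ₐ[ℂ] L} {a : L} (h : e a = a) : Commute (mulOp a) (lin e) := by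
  rw [Commute, SemiconjBy, lin_mul_mulOp, h]

lemma conjAlgEquiv_mulOp (e : L ≃ₐ[ℂ] L) (a : L) :
    e.toLinearEquiv.conjAlgEquiv ℂ (mulOp a) = mulOp (e a) := by
  ext f
  simp [LinearEquiv.conjAlgEquiv_apply, mulOp_eq_lmul]

lemma conjAlgEquiv_lin (e f : L ≃ₐ[ℂ] L) :
    e.toLinearEquiv.conjAlgEquiv ℂ (lin f) = lin (e * f * e⁻¹) := rfl

lemma commute_τ2_δ_one_one : Commute τ2 (δ 1 1) := by
  refine AlgEquiv.coe_toAlgHom_injective (algHom_ext_x fun k i => ?_)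
  show τ2 (δ 1 1 (x k i)) = δ 1 1 (τ2 (x k i))
  by_cases h : (k, i) = (1, 1)
  · simp only [Prod.mk.injEq] at h
    obtain ⟨rfl, rfl⟩ := h
    simp [δ_apply_x, τ2_apply_x, Equiv.swap_apply_of_ne_of_ne]
  · have h' : Equiv.swap ((2, 1) : ℕ × ℕ) (2, 2) (k, i) ≠ (1, 1) := by
      rwa [Ne, Equiv.swap_apply_eq_iff, Equiv.swap_apply_of_ne_of_ne (by decide) (by decide)]
    rw [δ_apply_x, if_neg h, τ2_apply_x, δ_apply_x, if_neg h']

lemma Xp_one : Xp 1 = lin (δ 1 1) * mulOp (-((x 2 1 - x 1 1) * (x 2 2 - x 1 1))) := by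
  simp [Xp, Ap, aP, Finset.Icc_self, Finset.prod_Icc_succ_top]

lemma Xm_one : Xm 1 = lin (δ 1 1).symm := by
  rw [Xm, Finset.Icc_self, Finset.sum_singleton, Am, show aM 1 1 = 1 by simp [aM],
    mulOp_eq_lmul, map_one, mul_one]

lemma Xd_one : Xd 1 = mulOp (x 1 1) := by
  simp [Xd]

lemma Xd_two : Xd 2 = mulOp (x 2 1 + x 2 2 + 1 - x 1 1) := by
  rw [Xd, Nat.add_one_sub_one, Finset.Icc_self, Finset.sum_singleton,
    show Finset.Icc 1 2 = {1, 2} from rfl, Finset.sum_pair (by norm_num)]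
  congr 1
  push_cast
  ring

lemma Vop_two : Vop 2 = mulOp (x 2 1 - x 2 2) := by
  rw [Vop, vand, show (Finset.Icc 1 2 ×ˢ Finset.Icc 1 2).filter (fun p => p.1 < p.2) = {(1, 2)}
    by decide, Finset.prod_singleton]

lemma Ugens_two : Ugens 2 = {Xp 1, Xm 1, Xd 1, Xd 2} := by
  ext u
  simp only [Ugens, Set.mem_union, Set.mem_ofPred_eq, Set.mem_insert_iff, Set.mem_singleton_iff]
  constructor
  · rintro (⟨k, hk1, hk2, rfl | rfl⟩ | ⟨k, hk1, hk2, rfl⟩)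
    · obtain rfl : k = 1 := by omega
      simp
    · obtain rfl : k = 1 := by omega
      simp
    · interval_cases k <;> simp
  · rintro (rfl | rfl | rfl | rfl)
    exacts [Or.inl ⟨1, le_rfl, le_rfl, Or.inl rfl⟩, Or.inl ⟨1, le_rfl, le_rfl, Or.inr rfl⟩,
      Or.inr ⟨1, le_rfl, one_le_two, rfl⟩, Or.inr ⟨2, one_le_two, le_rfl, rfl⟩]

lemma Agl_two : Agl 2 = Algebra.adjoin ℂ (insert (Vop 2) (Ualg 2 : Set (Module.End ℂ L))) := by
  have hV : {u | ∃ k, 2 ≤ k ∧ k ≤ 2 ∧ u = Vop k} = {Vop 2} := by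
    ext u
    refine ⟨fun ⟨k, hk, hk', hu⟩ => ?_, fun hu => ⟨2, le_rfl, le_rfl, hu⟩⟩
    obtain rfl : k = 2 := by omega
    exact hu
  rw [Ualg, Algebra.adjoin_insert_adjoin, Agl, hV, Set.union_singleton]

lemma conjAlgEquiv_τ2_eq_self_of_mem_Ualg_two {u : Module.End ℂ L} (hu : u ∈ Ualg 2) :
    τ2.toLinearEquiv.conjAlgEquiv ℂ u = u := by
  refine (AlgHom.eqOn_adjoin_iff (φ := (τ2.toLinearEquiv.conjAlgEquiv ℂ).toAlgHom)
    (ψ := AlgHom.id ℂ _)).mpr ?_ hu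
  rw [Ugens_two]
  rintro _ (rfl | rfl | rfl | rfl) <;> rw [AlgEquiv.toAlgHom_apply, AlgHom.id_apply]
  · rw [Xp_one, map_mul, conjAlgEquiv_lin, conjAlgEquiv_mulOp, commute_τ2_δ_one_one.eq,
      mul_inv_cancel_right]
    simp only [map_neg, map_mul, map_sub, τ2_x_one_one, τ2_x_two_one, τ2_x_two_two]
    congr 2
    ring
  · rw [Xm_one, ← AlgEquiv.aut_inv, conjAlgEquiv_lin, commute_τ2_δ_one_one.inv_right.eq,
      mul_inv_cancel_right]
  · rw [Xd_one, conjAlgEquiv_mulOp, τ2_x_one_one]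
  · rw [Xd_two, conjAlgEquiv_mulOp]
    simp only [map_sub, map_add, map_one, τ2_x_one_one, τ2_x_two_one, τ2_x_two_two]
    congr 1
    ring

lemma conjAlgEquiv_τ2_Vop_two : τ2.toLinearEquiv.conjAlgEquiv ℂ (Vop 2) = -Vop 2 := by
  rw [Vop_two, conjAlgEquiv_mulOp, map_sub, τ2_x_two_one, τ2_x_two_two, ← neg_sub,
    mulOp_eq_lmul, mulOp_eq_lmul, map_neg]

lemma commute_Vop_two_of_mem_Ualg_two {u : Module.End ℂ L} (hu : u ∈ Ualg 2) :
    Commute (Vop 2) u := by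
  have hδ : δ 1 1 (x 2 1 - x 2 2) = x 2 1 - x 2 2 := by simp [δ_apply_x]
  suffices Ualg 2 ≤ Subalgebra.centralizer ℂ {Vop 2} from
    (Subalgebra.mem_centralizer_iff ℂ).mp (this hu) _ rfl
  rw [Ualg, Algebra.adjoin_le_iff, Ugens_two]
  rintro _ (rfl | rfl | rfl | rfl) <;> rw [SetLike.mem_coe, Subalgebra.mem_centralizer_iff] <;>
    rintro _ rfl <;> rw [Vop_two] <;> apply Commute.eq
  · rw [Xp_one]
    exact (commute_mulOp_lin hδ).mul_right (commute_mulOp _ _)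
  · rw [Xm_one]
    exact commute_mulOp_lin ((δ 1 1).symm_apply_eq.mpr hδ.symm)
  · rw [Xd_one]
    exact commute_mulOp _ _
  · rw [Xd_two]
    exact commute_mulOp _ _

-- `(x₂₁ - x₂₂)² = (x₂₁ + x₂₂)² - 4 x₂₁ x₂₂`, and `x₂₁ x₂₂` is recovered from `a₁₁⁺`.
lemma Vop_two_mul_self : Vop 2 * Vop 2 = (Xd 2 + Xd 1 - 1) * (Xd 2 + Xd 1 - 1) +
    (4 : ℂ) • (Xm 1 * Xp 1 - Xd 1 * (Xd 2 + Xd 1 - 1) + Xd 1 * Xd 1) := by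
  rw [Xm_one, Xp_one, ← mul_assoc, lin_symm_mul_lin, one_mul, Xd_one, Xd_two, Vop_two]
  simp only [mulOp_eq_lmul, ← map_one (Algebra.lmul ℂ L), ← map_mul, ← map_add, ← map_sub,
    ← map_smul]
  congr 1
  rw [Algebra.smul_def, map_ofNat]
  ring

lemma Vop_two_mul_self_mem : Vop 2 * Vop 2 ∈ Ualg 2 := by
  have hgen : ∀ g ∈ ({Xp 1, Xm 1, Xd 1, Xd 2} : Set (Module.End ℂ L)), g ∈ Ualg 2 :=
    fun g hg => Algebra.subset_adjoin (Ugens_two ▸ hg)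
  have hXd1 := hgen (Xd 1) (by simp)
  have hs : Xd 2 + Xd 1 - 1 ∈ Ualg 2 := sub_mem (add_mem (hgen (Xd 2) (by simp)) hXd1) (one_mem _)
  rw [Vop_two_mul_self]
  exact add_mem (mul_mem hs hs) (Subalgebra.smul_mem _ (add_mem (sub_mem (mul_mem
    (hgen (Xm 1) (by simp)) (hgen (Xp 1) (by simp))) (mul_mem hXd1 hs)) (mul_mem hXd1 hXd1)) 4)

/-- the fixed subalgebra of `𝒜(gl_2)` under conjugation by `τ` equals `U_2`. -/
theorem Agl2_fixed_points_eq_U2 :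
    {u : Module.End ℂ L | u ∈ Agl 2 ∧ lin τ2 * u * lin τ2.symm = u} =
      (Ualg 2 : Set (Module.End ℂ L)) := by
  rw [Agl_two]
  exact setOf_mem_adjoin_insert_and_fixed_eq (τ2.toLinearEquiv.conjAlgEquiv ℂ).toAlgHom
    (fun _ => conjAlgEquiv_τ2_eq_self_of_mem_Ualg_two) conjAlgEquiv_τ2_Vop_two
    (fun _ => commute_Vop_two_of_mem_Ualg_two) Vop_two_mul_self_mem
end
end

section
/- The centralizer of the polynomial multiplication operators in U_f consists exactly of the multiplication operators by elements of R: {u ∈ U_f : u ∘ m_p = m_p ∘ u for all p ∈ ℂ[x]} = {m_g : g ∈ R}, where R is the subring of ℂ(x) generated by ℂ[x] together with {1/(x+k) : k ∈ ℤ}. -/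
noncomputable section

/-- The polynomial ring `ℂ[x]`. -/
abbrev Pc : Type := Polynomial ℂ

/-- `L = ℂ(x)`, the field of rational functions in one variable. -/
abbrev L1 : Type := FractionRing Pc

/-- The variable `x` as an element of `L`. -/
def x1 : L1 := algebraMap Pc L1 Polynomial.X

/-- The algebra automorphism of `ℂ[x]` with `x ↦ x − 1`. -/
def shift1 : Pc ≃ₐ[ℂ] Pc :=
  AlgEquiv.ofAlgHom
    (Polynomial.aeval (Polynomial.X - 1))
    (Polynomial.aeval (Polynomial.X + 1))
    (by apply Polynomial.algHom_ext; simp)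
    (by apply Polynomial.algHom_ext; simp)

/-- The ℂ-algebra automorphism `δ` of `L = ℂ(x)` with `δ(x) = x − 1`. -/
def δ1 : L1 ≃ₐ[ℂ] L1 := IsFractionRing.algEquivOfAlgEquiv shift1

/-- Multiplication by `a ∈ L` as a ℂ-linear endomorphism `m_a` of `L`. -/
def mul1 (a : L1) : Module.End ℂ L1 := LinearMap.mulLeft ℂ a

/-- The operator `X = δ ∘ m_{f(x)/x}`. -/
def Xop (f : Pc) : Module.End ℂ L1 :=
  δ1.toLinearMap * mul1 (algebraMap Pc L1 f / x1)

/-- The operator `Y = δ^{-1}`. -/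
def Yop : Module.End ℂ L1 := δ1.symm.toLinearMap

/-- `U_f`, the unital ℂ-subalgebra of `End_ℂ(L)` generated by the polynomial
multiplication operators together with `X` and `Y`. -/
def Uf (f : Pc) : Subalgebra ℂ (Module.End ℂ L1) :=
  Algebra.adjoin ℂ
    ({u | ∃ p : Pc, u = mul1 (algebraMap Pc L1 p)} ∪ {Xop f, Yop})

/-- `R`, the subring of `ℂ(x)` generated by `ℂ[x]` together with `{1/(x+k) : k ∈ ℤ}`. -/
def Rring : Subring L1 :=
  Subring.closure
    ({a | ∃ p : Pc, a = algebraMap Pc L1 p} ∪ {a | ∃ k : ℤ, a = 1 / (x1 + (k : L1))})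

/-!
The generators of `U_f` are of the form `m_g ∘ δ^k` with `g ∈ R`, and `δ^k ∘ m_g = m_{δ^k g} ∘ δ^k`
with `R` stable under `δ`, so every `u ∈ U_f` is a finite sum `∑ m_{g_k} ∘ δ^k` with `g_k ∈ R`.
Since `δ^k ∘ m_x = m_{x - k} ∘ δ^k`, commuting with `m_x` forces `k g_k = 0` by Dedekind's
independence of the characters `δ^k`, so `u = m_{g_0}`.

Conversely, `S = {a | m_a ∈ U_f}` is a `ℂ[x]`-subalgebra of `L` with `Y m_a X = m_{δ⁻¹(a) f/x}`
and `X m_a Y = m_{δ(a) δ(f/x)}`. Feeding in `a = 1` and then high powers of the last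
`1/(x - e)` obtained yields elements `h/((x - c)(x - d))` of `S` with `h` prime to the
denominator (this is where `f(0) ≠ 0` enters), and a Bézout identity puts `1/(x - d)` into `S`.
Going up with `Y, X` and down with `X, Y` reaches every `1/(x + k)`, `k ∈ ℤ`.
-/

open Polynomial

section Denominators

variable {R K : Type*} [CommRing R] [Field K] [Algebra R K] {S : Subalgebra R K}

theorem Subalgebra.inv_algebraMap_mem_of_isCoprime {p q : R} (hq : algebraMap R K q ≠ 0)
    (hpq : IsCoprime p q) (h : algebraMap R K p / algebraMap R K q ∈ S) :
    (algebraMap R K q)⁻¹ ∈ S := by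
  obtain ⟨a, b, hab⟩ := hpq
  have hab' := congrArg (algebraMap R K) hab
  simp only [map_add, map_mul, map_one] at hab'
  have hinv : (algebraMap R K q)⁻¹ =
      algebraMap R K a * (algebraMap R K p / algebraMap R K q) + algebraMap R K b := by
    field_simp
    linear_combination -hab'
  rw [hinv]
  exact add_mem (mul_mem (S.algebraMap_mem a) h) (S.algebraMap_mem b)

theorem Subalgebra.inv_algebraMap_mem_of_dvd {q r : R} (hq : algebraMap R K q ≠ 0) (hrq : r ∣ q)
    (h : (algebraMap R K q)⁻¹ ∈ S) : (algebraMap R K r)⁻¹ ∈ S := by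
  obtain ⟨t, rfl⟩ := hrq
  rw [map_mul] at hq h
  have hinv :
      (algebraMap R K r)⁻¹ = algebraMap R K t * (algebraMap R K r * algebraMap R K t)⁻¹ := by
    field_simp [right_ne_zero_of_mul hq]
  rw [hinv]
  exact mul_mem (S.algebraMap_mem t) h

end Denominators

section LinearFactors

variable {k K : Type*} [Field k] [Field K] [Algebra k[X] K] [FaithfulSMul k[X] K]
  {S : Subalgebra k[X] K}

theorem algebraMap_X_sub_C_ne_zero (c : k) : algebraMap k[X] K (X - C c) ≠ 0 :=
  (map_ne_zero_iff _ (FaithfulSMul.algebraMap_injective k[X] K)).2 (X_sub_C_ne_zero c)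

theorem isCoprime_X_sub_C_of_eval_ne_zero {p : k[X]} {c : k} (hpc : p.eval c ≠ 0) :
    IsCoprime p (X - C c) :=
  ((irreducible_X_sub_C c).coprime_iff_not_dvd.2 (by rwa [dvd_iff_isRoot])).symm

theorem Subalgebra.inv_algebraMap_X_sub_C_mem_of_forall_pow_mul_mem {p : k[X]} {c d : k}
    (hpc : p.eval c ≠ 0)
    (h : ∀ n : ℕ, (algebraMap k[X] K (X - C d))⁻¹ ^ n *
      (algebraMap k[X] K p / algebraMap k[X] K (X - C c)) ∈ S) :
    (algebraMap k[X] K (X - C d))⁻¹ ∈ S := by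
  obtain ⟨q, hp, hqd⟩ :=
    p.exists_eq_pow_rootMultiplicity_mul_and_not_dvd (by rintro rfl; simp at hpc) d
  generalize p.rootMultiplicity d = m at hp
  subst hp
  have hqc : q.eval c ≠ 0 := by
    intro hc
    simp [hc] at hpc
  -- `n = m + 1` cancels the factor `(x - d) ^ m` of `p`
  have hfrac : (algebraMap k[X] K (X - C d))⁻¹ ^ (m + 1) *
      (algebraMap k[X] K ((X - C d) ^ m * q) / algebraMap k[X] K (X - C c)) =
      algebraMap k[X] K q / algebraMap k[X] K ((X - C c) * (X - C d)) := by
    have := algebraMap_X_sub_C_ne_zero (K := K) c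
    have := algebraMap_X_sub_C_ne_zero (K := K) d
    simp only [map_mul, map_pow, inv_pow, pow_succ]
    field_simp
  have hcop : IsCoprime q ((X - C c) * (X - C d)) :=
    (isCoprime_X_sub_C_of_eval_ne_zero hqc).mul_right
      (isCoprime_X_sub_C_of_eval_ne_zero (by rwa [dvd_iff_isRoot, IsRoot.def] at hqd))
  have hden : algebraMap k[X] K ((X - C c) * (X - C d)) ≠ 0 := by
    rw [map_mul]
    exact mul_ne_zero (algebraMap_X_sub_C_ne_zero c) (algebraMap_X_sub_C_ne_zero d)
  exact S.inv_algebraMap_mem_of_dvd hden (dvd_mul_left _ _)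
    (S.inv_algebraMap_mem_of_isCoprime hden hcop (hfrac ▸ h (m + 1)))

theorem Subalgebra.inv_algebraMap_X_sub_C_mem_of_map_mul_mem (σ : K →+* K) {s : k}
    (hσ : ∀ e : k, σ (algebraMap k[X] K (X - C e)) = algebraMap k[X] K (X - C (e + s)))
    {p : k[X]} {c : k} (hpc : p.eval c ≠ 0)
    (hS : ∀ a ∈ S, σ a * (algebraMap k[X] K p / algebraMap k[X] K (X - C c)) ∈ S) (n : ℕ) :
    (algebraMap k[X] K (X - C (c + n * s)))⁻¹ ∈ S := by
  induction n with
  | zero =>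
    simpa using S.inv_algebraMap_mem_of_isCoprime (algebraMap_X_sub_C_ne_zero c)
      (isCoprime_X_sub_C_of_eval_ne_zero hpc) (by simpa using hS 1 S.one_mem)
  | succ n ih =>
    refine S.inv_algebraMap_X_sub_C_mem_of_forall_pow_mul_mem hpc fun N => ?_
    have := hS _ (pow_mem ih N)
    rwa [map_pow, map_inv₀, hσ, show c + n * s + s = c + (n + 1 : ℕ) * s by push_cast; ring]
      at this

end LinearFactors

theorem AlgEquiv.toLinearMap_mul_mulLeft {R A : Type*} [CommSemiring R] [Semiring A] [Algebra R A]
    (σ : A ≃ₐ[R] A) (a : A) :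
    σ.toLinearMap * LinearMap.mulLeft R a = LinearMap.mulLeft R (σ a) * σ.toLinearMap := by
  ext b
  simp

theorem AlgEquiv.linearIndependent_zpow_toLinearMap {k K : Type*} [CommSemiring k] [Field K]
    [Algebra k K] (σ : K ≃ₐ[k] K) (hσ : Function.Injective (σ ^ · : ℤ → K ≃ₐ[k] K)) :
    LinearIndependent K (fun n : ℤ => (σ ^ n).toLinearMap) :=
  (linearIndependent_toLinearMap k K K).comp (fun n : ℤ => ((σ ^ n : K ≃ₐ[k] K) : K →ₐ[k] K))
    (AlgEquiv.coe_toAlgHom_injective.comp hσ)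

theorem algebraMap_eq_aeval_x1 (p : Pc) : algebraMap Pc L1 p = aeval x1 p := by
  rw [x1, aeval_algebraMap_apply, aeval_X_left_apply]

theorem δ1_algebraMap (p : Pc) : δ1 (algebraMap Pc L1 p) = algebraMap Pc L1 (shift1 p) :=
  IsFractionRing.algEquivOfAlgEquiv_algebraMap shift1 p

theorem δ1_algebraMap_X_sub_C (e : ℂ) :
    δ1 (algebraMap Pc L1 (X - C e)) = algebraMap Pc L1 (X - C (e + 1)) := by
  rw [δ1_algebraMap]
  congr 1
  simp [shift1]
  ring

theorem δ1_symm_algebraMap_X_sub_C (e : ℂ) :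
    δ1.symm (algebraMap Pc L1 (X - C e)) = algebraMap Pc L1 (X - C (e - 1)) := by
  rw [AlgEquiv.symm_apply_eq, δ1_algebraMap_X_sub_C, sub_add_cancel]

theorem δ1_x1 : δ1 x1 = x1 - 1 := by
  simpa [x1] using δ1_algebraMap_X_sub_C 0

theorem δ1_zpow_x1 (n : ℤ) : (δ1 ^ n) x1 = x1 - n := by
  induction n using Int.induction_on with
  | zero => simp
  | succ n ih =>
    rw [zpow_add_one, AlgEquiv.mul_apply, δ1_x1, map_sub, ih, map_one]
    push_cast
    ring
  | pred n ih =>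
    have hinv : δ1⁻¹ x1 = x1 + 1 := by
      rw [AlgEquiv.aut_inv, AlgEquiv.symm_apply_eq, map_add, δ1_x1, map_one]
      ring
    rw [zpow_sub_one, AlgEquiv.mul_apply, hinv, map_add, ih, map_one]
    push_cast
    ring

theorem shift1_eval_one (f : Pc) : (shift1 f).eval 1 = f.eval 0 := by
  simp [shift1, ← comp_eq_aeval, eval_comp]

theorem algebraMap_mem_Rring (p : Pc) : algebraMap Pc L1 p ∈ Rring :=
  Subring.subset_closure (Or.inl ⟨p, rfl⟩)

theorem smul_mem_Rring (c : ℂ) {g : L1} (hg : g ∈ Rring) : c • g ∈ Rring := by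
  rw [Algebra.smul_def, IsScalarTower.algebraMap_apply ℂ Pc L1]
  exact Rring.mul_mem (algebraMap_mem_Rring _) hg

theorem map_mem_Rring {F : Type*} [FunLike F L1 L1] [AlgHomClass F ℂ L1 L1] (σ : F) (j : ℤ)
    (hσ : σ x1 = x1 + j) {g : L1} (hg : g ∈ Rring) : σ g ∈ Rring := by
  suffices Rring ≤ Rring.comap (σ : L1 →+* L1) from this hg
  refine Subring.closure_le.2 ?_
  rintro _ (⟨p, rfl⟩ | ⟨i, rfl⟩)
  · show σ (algebraMap Pc L1 p) ∈ Rring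
    have hx : x1 + j = algebraMap Pc L1 (X + (j : Pc)) := by simp [x1]
    rw [algebraMap_eq_aeval_x1, ← aeval_algHom_apply, hσ, hx, aeval_algebraMap_apply]
    exact algebraMap_mem_Rring _
  · show σ (1 / (x1 + i)) ∈ Rring
    rw [map_div₀, map_one, map_add, hσ, map_intCast, add_assoc, ← Int.cast_add]
    exact Subring.subset_closure (Or.inr ⟨j + i, rfl⟩)

theorem mul1_mul_eq_smul (a : L1) (u : Module.End ℂ L1) : mul1 a * u = a • u :=
  rfl

def shiftOp (n : ℤ) : Module.End ℂ L1 := (δ1 ^ n).toLinearMap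

theorem shiftOp_add (m n : ℤ) : shiftOp (m + n) = shiftOp m * shiftOp n := by
  rw [shiftOp, zpow_add]
  rfl

theorem shiftOp_zero : shiftOp 0 = 1 := by
  simp [shiftOp]

theorem shiftOp_mul_mul1 (n : ℤ) (a : L1) : shiftOp n * mul1 a = (δ1 ^ n) a • shiftOp n :=
  (δ1 ^ n).toLinearMap_mul_mulLeft a

theorem linearIndependent_shiftOp : LinearIndependent L1 shiftOp :=
  δ1.linearIndependent_zpow_toLinearMap fun m n h => by
    simpa [δ1_zpow_x1] using congrArg (fun σ : L1 ≃ₐ[ℂ] L1 => σ x1) h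

def shiftMonomials : Submonoid (Module.End ℂ L1) where
  carrier := {u | ∃ g ∈ Rring, ∃ n : ℤ, u = g • shiftOp n}
  one_mem' := ⟨1, Rring.one_mem, 0, by rw [shiftOp_zero, one_smul]⟩
  mul_mem' := by
    rintro _ _ ⟨g, hg, m, rfl⟩ ⟨h, hh, n, rfl⟩
    have hm : (δ1 ^ m : L1 ≃ₐ[ℂ] L1) x1 = x1 + (-m : ℤ) := by
      rw [δ1_zpow_x1]; push_cast; ring
    refine ⟨g * (δ1 ^ m) h, Rring.mul_mem hg (map_mem_Rring _ _ hm hh), m + n, ?_⟩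
    rw [smul_mul_assoc, ← mul1_mul_eq_smul h, ← mul_assoc, shiftOp_mul_mul1, smul_mul_assoc,
      smul_smul, shiftOp_add]

theorem Uf_le_adjoin_shiftMonomials (f : Pc) :
    Uf f ≤ Algebra.adjoin ℂ (shiftMonomials : Set (Module.End ℂ L1)) := by
  refine Algebra.adjoin_le ?_
  rintro _ (⟨p, rfl⟩ | rfl | rfl)
  · refine Algebra.subset_adjoin ⟨algebraMap Pc L1 p, algebraMap_mem_Rring p, 0, ?_⟩
    rw [shiftOp_zero]
    rfl
  · have hfx : algebraMap Pc L1 f / x1 ∈ Rring := by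
      have hx : (1 : L1) / (x1 + ((0 : ℤ) : L1)) ∈ Rring := Subring.subset_closure (Or.inr ⟨0, rfl⟩)
      rw [Int.cast_zero, add_zero] at hx
      rw [div_eq_mul_one_div]
      exact Rring.mul_mem (algebraMap_mem_Rring f) hx
    refine Algebra.subset_adjoin ⟨δ1 (algebraMap Pc L1 f / x1),
      map_mem_Rring δ1 (-1) (by simp [δ1_x1, sub_eq_add_neg]) hfx, 1, ?_⟩
    rw [Xop, ← zpow_one δ1]
    exact shiftOp_mul_mul1 1 _
  · exact Algebra.subset_adjoin ⟨1, Rring.one_mem, -1, by rw [one_smul]; rfl⟩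

theorem mem_span_shiftMonomials {f : Pc} {u : Module.End ℂ L1} (hu : u ∈ Uf f) :
    u ∈ Submodule.span ℂ (shiftMonomials : Set (Module.End ℂ L1)) := by
  have := Uf_le_adjoin_shiftMonomials f hu
  rwa [← Subalgebra.mem_toSubmodule, Algebra.adjoin_eq_span, Submonoid.closure_eq] at this

theorem exists_linearCombination_shiftOp_eq {u : Module.End ℂ L1}
    (hu : u ∈ Submodule.span ℂ (shiftMonomials : Set (Module.End ℂ L1))) :
    ∃ b : ℤ →₀ L1, (∀ n, b n ∈ Rring) ∧ Finsupp.linearCombination L1 shiftOp b = u := by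
  induction hu using Submodule.span_induction with
  | mem u hu =>
    obtain ⟨g, hg, n, rfl⟩ := hu
    refine ⟨Finsupp.single n g, fun m => ?_, by simp⟩
    rw [Finsupp.single_apply]
    split_ifs
    exacts [hg, Rring.zero_mem]
  | zero => exact ⟨0, fun _ => Rring.zero_mem, map_zero _⟩
  | add u v _ _ hu hv =>
    obtain ⟨b, hb, rfl⟩ := hu
    obtain ⟨b', hb', rfl⟩ := hv
    exact ⟨b + b', fun n => Rring.add_mem (hb n) (hb' n), map_add _ _ _⟩
  | smul c u _ hu =>
    obtain ⟨b, hb, rfl⟩ := hu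
    exact ⟨c • b, fun n => smul_mem_Rring c (hb n), LinearMap.map_smul_of_tower _ c b⟩

theorem eq_zero_of_commute_mul1_x1 {b : ℤ →₀ L1}
    (hb : Commute (Finsupp.linearCombination L1 shiftOp b) (mul1 x1)) {n : ℤ} (hn : n ≠ 0) :
    b n = 0 := by
  have hsum : ∑ m ∈ b.support, (-(m : L1) * b m) • shiftOp m = 0 := by
    have hright : Finsupp.linearCombination L1 shiftOp b * mul1 x1 =
        ∑ m ∈ b.support, (b m * (x1 - m)) • shiftOp m := by
      rw [Finsupp.linearCombination_apply, Finsupp.sum, Finset.sum_mul]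
      refine Finset.sum_congr rfl fun m _ => ?_
      rw [smul_mul_assoc, shiftOp_mul_mul1, δ1_zpow_x1, smul_smul]
    have hleft : mul1 x1 * Finsupp.linearCombination L1 shiftOp b =
        ∑ m ∈ b.support, (x1 * b m) • shiftOp m := by
      rw [Finsupp.linearCombination_apply, Finsupp.sum, Finset.mul_sum]
      exact Finset.sum_congr rfl fun m _ => smul_smul x1 (b m) (shiftOp m)
    rw [← sub_eq_zero.2 hb.eq, hright, hleft, ← Finset.sum_sub_distrib]
    refine Finset.sum_congr rfl fun m _ => ?_
    rw [← sub_smul (M := Module.End ℂ L1)]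
    congr 1
    ring
  by_cases hm : n ∈ b.support
  · simpa [hn] using linearIndependent_iff'.1 linearIndependent_shiftOp b.support _ hsum n hm
  · exact Finsupp.notMem_support_iff.1 hm

theorem exists_eq_mul1_of_mem_Uf_of_commute {f : Pc} {u : Module.End ℂ L1} (hu : u ∈ Uf f)
    (hux : Commute u (mul1 x1)) : ∃ g ∈ Rring, u = mul1 g := by
  obtain ⟨b, hb, rfl⟩ := exists_linearCombination_shiftOp_eq (mem_span_shiftMonomials hu)
  have hb0 : b = Finsupp.single 0 (b 0) := by
    ext n
    by_cases hn : n = 0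
    · simp [hn]
    · simp [Ne.symm hn, eq_zero_of_commute_mul1_x1 hux hn]
  refine ⟨b 0, hb 0, ?_⟩
  rw [hb0, Finsupp.linearCombination_single, shiftOp_zero, Finsupp.single_eq_same]
  ext
  simp [mul1]

def multipliersUf (f : Pc) : Subalgebra Pc L1 where
  toSubsemiring := ((Uf f).comap (Algebra.lmul ℂ L1)).toSubsemiring
  algebraMap_mem' p := Algebra.subset_adjoin (Or.inl ⟨p, rfl⟩)

theorem Yop_mul_mul1_mul_Xop (f : Pc) (a : L1) :
    Yop * mul1 a * Xop f = mul1 (δ1.symm a * (algebraMap Pc L1 f / x1)) := by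
  ext b
  simp [Yop, Xop, mul1]

theorem Xop_mul_mul1_mul_Yop (f : Pc) (a : L1) :
    Xop f * mul1 a * Yop = mul1 (δ1 a * δ1 (algebraMap Pc L1 f / x1)) := by
  ext b
  simp [Yop, Xop, mul1]
  ring

theorem mem_multipliersUf {f : Pc} {a : L1} : a ∈ multipliersUf f ↔ mul1 a ∈ Uf f :=
  Iff.rfl

theorem one_div_x1_add_intCast_mem_multipliersUf {f : Pc} (hf : f.eval 0 ≠ 0) (j : ℤ) :
    1 / (x1 + j) ∈ multipliersUf f := by
  have hXop : Xop f ∈ Uf f := Algebra.subset_adjoin (Or.inr (Set.mem_insert _ _))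
  have hYop : Yop ∈ Uf f := Algebra.subset_adjoin (Or.inr (Set.mem_insert_of_mem _ rfl))
  have hx1 : algebraMap Pc L1 (X - C 0) = x1 := by simp [x1]
  have hnonneg := (multipliersUf f).inv_algebraMap_X_sub_C_mem_of_map_mul_mem (δ1.symm : L1 →+* L1)
    (s := -1) (fun e => by simpa [sub_eq_add_neg] using δ1_symm_algebraMap_X_sub_C e) hf
    (fun a ha => by
      rw [mem_multipliersUf] at ha ⊢
      rw [RingHom.coe_coe, hx1, ← Yop_mul_mul1_mul_Xop]
      exact (Uf f).mul_mem ((Uf f).mul_mem hYop ha) hXop)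
  have hneg := (multipliersUf f).inv_algebraMap_X_sub_C_mem_of_map_mul_mem (δ1 : L1 →+* L1)
    (s := 1) δ1_algebraMap_X_sub_C (p := shift1 f) (c := 1) (by rwa [shift1_eval_one])
    (fun a ha => by
      rw [mem_multipliersUf] at ha ⊢
      rw [RingHom.coe_coe, ← δ1_algebraMap, ← zero_add (1 : ℂ), ← δ1_algebraMap_X_sub_C, hx1,
        ← map_div₀, ← Xop_mul_mul1_mul_Yop]
      exact (Uf f).mul_mem ((Uf f).mul_mem hXop ha) hYop)
  rcases j with n | n
  · convert hnonneg n using 1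
    simp [x1]
  · convert hneg n using 1
    simp [x1, Int.negSucc_eq]
    ring

theorem Rring_le_multipliersUf {f : Pc} (hf : f.eval 0 ≠ 0) :
    Rring ≤ (multipliersUf f).toSubring :=
  Subring.closure_le.2 <| by
    rintro _ (⟨p, rfl⟩ | ⟨j, rfl⟩)
    exacts [(multipliersUf f).algebraMap_mem p, one_div_x1_add_intCast_mem_multipliersUf hf j]

/-- the centralizer of the polynomial multiplication operators in `U_f` is
exactly `{m_g : g ∈ R}`. -/
theorem centralizer_of_polynomials_in_Uf (f : Pc) (hf : Polynomial.eval 0 f ≠ 0) :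
    {u : Module.End ℂ L1 | u ∈ Uf f ∧
        ∀ p : Pc, u * mul1 (algebraMap Pc L1 p) = mul1 (algebraMap Pc L1 p) * u} =
      {u | ∃ g ∈ Rring, u = mul1 g} := by
  ext u
  constructor
  · rintro ⟨hu, hcomm⟩
    exact exists_eq_mul1_of_mem_Uf_of_commute hu (hcomm X)
  · rintro ⟨g, hg, rfl⟩
    exact ⟨Rring_le_multipliersUf hf hg, fun p => ((Commute.all g _).map (Algebra.lmul ℂ L1)).eq⟩
end
end
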